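/- arXiv:1712.09230 — 2 statements merged into one kernel-verified Lean document; each statement's English description precedes it below -/
import Mathlib

section
/- At any point during Patience Sorting the top elements of the piles are strictly increasing from left to right: for every t with 1 ≤ t ≤ n and all k < k', if the sets A = {i ≤ t : L(i) = k} and B = {i ≤ t : L(i) = k'} are both nonempty, then min{σ(i) : i ∈ A} < min{σ(i) : i ∈ B}. -/
/-- `l` is the index list of a (strictly) increasing subsequence of `σ`. -/
def IsIncSubseq {n : ℕ} (σ : Fin n → ℤ) (l : List (Fin n)) : Prop :=
  l.Chain' (fun i j => i < j ∧ σ i < σ j)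

/-- Length of a longest increasing subsequence of `σ`. -/
noncomputable def lis {n : ℕ} (σ : Fin n → ℤ) : ℕ :=
  sSup {m | ∃ l : List (Fin n), IsIncSubseq σ l ∧ l.length = m}

/-- Length of a longest increasing subsequence of `σ` ending at index `i`. -/
noncomputable def L {n : ℕ} (σ : Fin n → ℤ) (i : Fin n) : ℕ :=
  sSup {m | ∃ l : List (Fin n), IsIncSubseq σ l ∧ l.getLast? = some i ∧ l.length = m}

/-- Length of a longest increasing subsequence of `σ` starting at index `i`. -/
noncomputable def R {n : ℕ} (σ : Fin n → ℤ) (i : Fin n) : ℕ :=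
  sSup {m | ∃ l : List (Fin n), IsIncSubseq σ l ∧ l.head? = some i ∧ l.length = m}

/-!
A longest increasing subsequence ending at `j` passes, one step before `j`, through an
index `i` with `L σ i = L σ j - 1`; iterating, it meets every pile `k < L σ j` at an earlier,
smaller entry. So if `b` carries the top of pile `k'` at time `t`, some `i < b` with
`σ i < σ b` lies in pile `k`, and the top of pile `k` is at most `σ i < σ b`.
-/

namespace IsIncSubseq

variable {n : ℕ} {σ : Fin n → ℤ} {l : List (Fin n)}

theorem length_le (hl : IsIncSubseq σ l) : l.length ≤ n := by
  have hlt : l.Pairwise (· < ·) := List.isChain_iff_pairwise.mp (hl.imp fun _ _ h => h.1)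
  simpa using hlt.nodup.length_le_card

theorem append_singleton {i j : Fin n} (hl : IsIncSubseq σ l) (hlast : l.getLast? = some i)
    (hij : i < j) (hσ : σ i < σ j) : IsIncSubseq σ (l ++ [j]) :=
  List.IsChain.append hl (List.isChain_singleton j) (by simp [hlast, hij, hσ])

end IsIncSubseq

section PileIndex

variable {n : ℕ} {σ : Fin n → ℤ} {i j : Fin n}

def incLengthsEndingAt (σ : Fin n → ℤ) (i : Fin n) : Set ℕ :=
  {m | ∃ l : List (Fin n), IsIncSubseq σ l ∧ l.getLast? = some i ∧ l.length = m}

theorem bddAbove_incLengthsEndingAt : BddAbove (incLengthsEndingAt σ i) :=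
  ⟨n, fun _ ⟨_, hl, _, hm⟩ => hm ▸ hl.length_le⟩

theorem one_mem_incLengthsEndingAt : 1 ∈ incLengthsEndingAt σ i :=
  ⟨[i], List.isChain_singleton i, rfl, rfl⟩

theorem length_le_L {l : List (Fin n)} (hl : IsIncSubseq σ l) (hlast : l.getLast? = some i) :
    l.length ≤ L σ i :=
  le_csSup bddAbove_incLengthsEndingAt ⟨l, hl, hlast, rfl⟩

theorem one_le_L : 1 ≤ L σ i :=
  le_csSup bddAbove_incLengthsEndingAt one_mem_incLengthsEndingAt

theorem exists_isIncSubseq_length_eq_L (σ : Fin n → ℤ) (i : Fin n) :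
    ∃ l : List (Fin n), IsIncSubseq σ l ∧ l.getLast? = some i ∧ l.length = L σ i :=
  Nat.sSup_mem ⟨1, one_mem_incLengthsEndingAt⟩ bddAbove_incLengthsEndingAt

theorem L_lt_L_of_lt (hij : i < j) (hσ : σ i < σ j) : L σ i < L σ j := by
  obtain ⟨l, hl, hlast, hlen⟩ := exists_isIncSubseq_length_eq_L σ i
  have := length_le_L (hl.append_singleton hlast hij hσ) List.getLast?_concat
  simp only [List.length_append, List.length_singleton] at this
  omega

theorem exists_L_add_one_eq_L (hj : 2 ≤ L σ j) :
    ∃ i < j, σ i < σ j ∧ L σ i + 1 = L σ j := by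
  obtain ⟨l, hl, hlast, hlen⟩ := exists_isIncSubseq_length_eq_L σ j
  obtain ⟨l', rfl⟩ : ∃ l', l = l' ++ [j] :=
    ⟨l.dropLast, (List.dropLast_append_getLast? j hlast).symm⟩
  have hlen' : l'.length + 1 = L σ j := by simpa using hlen
  obtain ⟨i, hi⟩ : ∃ i, l'.getLast? = some i :=
    Option.isSome_iff_exists.mp (List.getLast?_isSome.mpr (List.ne_nil_of_length_pos (by omega)))
  have hrel : i < j ∧ σ i < σ j := (List.isChain_append.mp hl).2.2 i hi j rfl
  refine ⟨i, hrel.1, hrel.2, le_antisymm (L_lt_L_of_lt hrel.1 hrel.2) ?_⟩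
  have := length_le_L hl.left_of_append hi
  omega

theorem exists_lt_L_eq {k : ℕ} (hk : 1 ≤ k) (hkj : k < L σ j) :
    ∃ i < j, σ i < σ j ∧ L σ i = k := by
  obtain ⟨d, hd⟩ : ∃ d, L σ j = k + 1 + d := ⟨L σ j - (k + 1), by omega⟩
  induction d generalizing j with
  | zero =>
    obtain ⟨i, hij, hσ, hi⟩ := exists_L_add_one_eq_L (σ := σ) (j := j) (by omega)
    exact ⟨i, hij, hσ, by omega⟩
  | succ d ih =>
    obtain ⟨i, hij, hσ, hi⟩ := exists_L_add_one_eq_L (σ := σ) (j := j) (by omega)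
    obtain ⟨i', hi'i, hσ', hi'⟩ := ih (j := i) (by omega) (by omega)
    exact ⟨i', hi'i.trans hij, hσ'.trans hσ, hi'⟩

end PileIndex

/-- At any point `t` during Patience Sorting the top elements of the piles are strictly
increasing from left to right: for `k < k'`, if both partial piles
`A = {i ≤ t | L σ i = k}` and `B = {i ≤ t | L σ i = k'}` are nonempty, then the top of
pile `k` (the minimum of `σ` over `A`) is smaller than the top of pile `k'`. -/
theorem tops_strictly_increasing {n : ℕ} (σ : Fin n → ℤ) (t : Fin n) (k k' : ℕ)
    (hkk' : k < k')
    (hA : (Finset.univ.filter (fun i : Fin n => i ≤ t ∧ L σ i = k)).Nonempty)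
    (hB : (Finset.univ.filter (fun i : Fin n => i ≤ t ∧ L σ i = k')).Nonempty) :
    (Finset.univ.filter (fun i : Fin n => i ≤ t ∧ L σ i = k)).inf' hA σ <
      (Finset.univ.filter (fun i : Fin n => i ≤ t ∧ L σ i = k')).inf' hB σ := by
  obtain ⟨a, ha⟩ := hA
  obtain ⟨b, hb, hb_top⟩ := Finset.exists_mem_eq_inf' hB σ
  simp only [Finset.mem_filter, Finset.mem_univ, true_and] at ha hb
  obtain ⟨i, hib, hσ, hi⟩ := exists_lt_L_eq (ha.2 ▸ one_le_L) (hb.2 ▸ hkk')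
  calc _ ≤ σ i := Finset.inf'_le σ (by simpa using ⟨hib.le.trans hb.1, hi⟩)
    _ < σ b := hσ
    _ = _ := hb_top.symm
end

section
/- Splitting lemma: suppose σ(j) is the k-th element of some longest increasing subsequence of σ (i.e., there are indices i₁ < ⋯ < i_ℓ with σ(i₁) < ⋯ < σ(i_ℓ), ℓ = lis(σ), and i_k = j). Let σ_L be the subsequence of ⟨σ(1),…,σ(j−1)⟩ formed by the elements smaller than σ(j), and let σ_R be the subsequence of ⟨σ(j+1),…,σ(n)⟩ formed by the elements larger than σ(j). Then concatenating any longest increasing subsequence of σ_L, the element σ(j), and any longest increasing subsequence of σ_R yields a longest increasing subsequence of σ; in particular lis(σ) = lis(σ_L) + 1 + lis(σ_R). -/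
/-- Length of a longest strictly increasing subsequence of a list of integers. -/
noncomputable def lisL (l : List ℤ) : ℕ :=
  sSup {m | ∃ t : List ℤ, t.Sublist l ∧ t.Pairwise (· < ·) ∧ t.length = m}

open scoped List

section
variable {n : ℕ} (σ : Fin n → ℤ)

def smallerBefore (j : Fin n) : List ℤ :=
  ((List.ofFn σ).take j.val).filter (fun a => a < σ j)

def largerAfter (j : Fin n) : List ℤ :=
  ((List.ofFn σ).drop (j.val + 1)).filter (fun a => σ j < a)

theorem isIncSubseq_iff_pairwise {l : List (Fin n)} :
    IsIncSubseq σ l ↔ l.Pairwise (fun i j => i < j ∧ σ i < σ j) :=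
  letI : Trans (fun i j : Fin n => i < j ∧ σ i < σ j) (fun i j => i < j ∧ σ i < σ j)
      (fun i j => i < j ∧ σ i < σ j) :=
    ⟨fun h₁ h₂ => ⟨h₁.1.trans h₂.1, h₁.2.trans h₂.2⟩⟩
  List.isChain_iff_pairwise

theorem length_le_of_isIncSubseq {l : List (Fin n)} (hl : IsIncSubseq σ l) : l.length ≤ n := by
  have hlt : l.Pairwise (· < ·) := ((isIncSubseq_iff_pairwise σ).mp hl).imp And.left
  simpa using hlt.nodup.length_le_card

theorem length_le_lis_of_sublist_ofFn {t : List ℤ} (ht : t <+ List.ofFn σ)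
    (hts : t.Pairwise (· < ·)) : t.length ≤ lis σ := by
  rw [List.ofFn_eq_map] at ht
  obtain ⟨is, his, rfl⟩ := List.sublist_map_iff.mp ht
  have hinc : IsIncSubseq σ is := (isIncSubseq_iff_pairwise σ).mpr <|
    ((List.pairwise_lt_finRange n).sublist his).and (List.pairwise_map.mp hts)
  exact le_csSup ⟨n, by rintro m ⟨l, hl, rfl⟩; exact length_le_of_isIncSubseq σ hl⟩
    ⟨is, hinc, (List.length_map _).symm⟩

end

theorem length_le_lisL {l t : List ℤ} (ht : t <+ l) (hts : t.Pairwise (· < ·)) :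
    t.length ≤ lisL l :=
  le_csSup ⟨l.length, by rintro m ⟨s, hs, -, rfl⟩; exact hs.length_le⟩ ⟨t, ht, hts, rfl⟩

namespace List

theorem Pairwise.sublist_of_subset {α : Type*} [Preorder α] {l₁ l₂ : List α}
    (h₁ : l₁.Pairwise (· < ·)) (h₂ : l₂.Pairwise (· < ·)) (h : l₁ ⊆ l₂) : l₁ <+ l₂ :=
  sublist_of_subperm_of_pairwise (h₁.nodup.subperm h) h₁ h₂

theorem sublist_take_finRange {n m : ℕ} {is : List (Fin n)} (his : is.Pairwise (· < ·))
    (hm : ∀ i ∈ is, i.val < m) : is <+ (finRange n).take m :=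
  his.sublist_of_subset ((pairwise_lt_finRange n).sublist (take_sublist _ _)) fun i hi =>
    mem_take_iff_getElem.mpr ⟨i, by simp [hm i hi], by simp⟩

theorem sublist_drop_finRange {n m : ℕ} {is : List (Fin n)} (his : is.Pairwise (· < ·))
    (hm : ∀ i ∈ is, m ≤ i.val) : is <+ (finRange n).drop m :=
  his.sublist_of_subset ((pairwise_lt_finRange n).sublist (drop_sublist _ _)) fun i hi =>
    have := hm i hi
    mem_drop_iff_getElem.mpr ⟨i - m, by rw [length_finRange]; omega,
      by ext; simp only [getElem_finRange, Fin.val_cast]; omega⟩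

end List

section
variable {n : ℕ} (σ : Fin n → ℤ) {j : Fin n}

theorem map_sublist_smallerBefore {is : List (Fin n)} (his : is.Pairwise (· < ·))
    (hj : ∀ i ∈ is, i < j ∧ σ i < σ j) : is.map σ <+ smallerBefore σ j := by
  refine List.sublist_filter_iff.mpr ⟨is.map σ, ?_, ?_⟩
  · rw [List.ofFn_eq_map, ← List.map_take]
    exact (List.sublist_take_finRange his fun i hi => (hj i hi).1).map σ
  · exact (List.filter_eq_self.mpr <| by simpa using fun i hi => (hj i hi).2).symm

theorem map_sublist_largerAfter {is : List (Fin n)} (his : is.Pairwise (· < ·))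
    (hj : ∀ i ∈ is, j < i ∧ σ j < σ i) : is.map σ <+ largerAfter σ j := by
  refine List.sublist_filter_iff.mpr ⟨is.map σ, ?_, ?_⟩
  · rw [List.ofFn_eq_map, ← List.map_drop]
    exact (List.sublist_drop_finRange his fun i hi => (hj i hi).1).map σ
  · exact (List.filter_eq_self.mpr <| by simpa using fun i hi => (hj i hi).2).symm

theorem lt_of_mem_smallerBefore {a : ℤ} (ha : a ∈ smallerBefore σ j) : a < σ j := by
  simpa using List.of_mem_filter ha

theorem lt_of_mem_largerAfter {a : ℤ} (ha : a ∈ largerAfter σ j) : σ j < a := by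
  simpa using List.of_mem_filter ha

theorem ofFn_eq_take_append_cons_drop (j : Fin n) :
    List.ofFn σ = (List.ofFn σ).take j ++ σ j :: (List.ofFn σ).drop (j + 1) := by
  have hj : j.val < (List.ofFn σ).length := by simp
  rw [← List.getElem_ofFn (f := σ) hj, List.getElem_cons_drop, List.take_append_drop]

theorem append_cons_sublist_ofFn {tL tR : List ℤ} (hL : tL <+ smallerBefore σ j)
    (hR : tR <+ largerAfter σ j) : tL ++ σ j :: tR <+ List.ofFn σ := by
  rw [ofFn_eq_take_append_cons_drop σ j]
  exact (hL.trans List.filter_sublist).append ((hR.trans List.filter_sublist).cons_cons _)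

theorem pairwise_append_cons {tL tR : List ℤ} (hL : tL <+ smallerBefore σ j)
    (hR : tR <+ largerAfter σ j) (hLs : tL.Pairwise (· < ·)) (hRs : tR.Pairwise (· < ·)) :
    (tL ++ σ j :: tR).Pairwise (· < ·) := by
  have hlt : ∀ a ∈ tL, a < σ j := fun a ha => lt_of_mem_smallerBefore σ (hL.subset ha)
  have hgt : ∀ b ∈ tR, σ j < b := fun b hb => lt_of_mem_largerAfter σ (hR.subset hb)
  refine List.pairwise_append.mpr ⟨hLs, List.pairwise_cons.mpr ⟨hgt, hRs⟩, ?_⟩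
  rintro a ha b (_ | ⟨_, hb⟩)
  · exact hlt a ha
  · exact (hlt a ha).trans (hgt b hb)

theorem length_le_lisL_smallerBefore_add_lisL_largerAfter {l : List (Fin n)}
    (hl : IsIncSubseq σ l) (k : Fin l.length) (hj : l.get k = j) :
    l.length ≤ lisL (smallerBefore σ j) + 1 + lisL (largerAfter σ j) := by
  have hsplit : l = l.take k ++ j :: l.drop (k + 1) := by
    rw [← hj, List.get_eq_getElem, List.getElem_cons_drop, List.take_append_drop]
  have hpw := (isIncSubseq_iff_pairwise σ).mp hl
  rw [hsplit, List.pairwise_append, List.pairwise_cons] at hpw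
  obtain ⟨hbefore, ⟨hafter_j, hafter⟩, hbefore_j⟩ := hpw
  have hk : (l.take k).length ≤ lisL (smallerBefore σ j) := by
    simpa using length_le_lisL
      (map_sublist_smallerBefore σ (hbefore.imp And.left) fun i hi => hbefore_j i hi j (by simp))
      (List.pairwise_map.mpr (hbefore.imp And.right))
  have hk' : (l.drop (k + 1)).length ≤ lisL (largerAfter σ j) := by
    simpa using length_le_lisL (map_sublist_largerAfter σ (hafter.imp And.left) hafter_j)
      (List.pairwise_map.mpr (hafter.imp And.right))
  simp only [List.length_take, List.length_drop] at hk hk'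
  omega

end

/-- Splitting lemma: if `σ j` is the `(k+1)`-st element of some longest increasing
subsequence of `σ` (index list `l`), `σL` is the subsequence of `⟨σ 0, …, σ (j-1)⟩`
of elements smaller than `σ j`, and `σR` is the subsequence of `⟨σ (j+1), …, σ (n-1)⟩`
of elements larger than `σ j`, then concatenating any longest increasing subsequence
of `σL`, the element `σ j`, and any longest increasing subsequence of `σR` yields a
longest increasing subsequence of `σ`; in particular
`lis σ = lisL σL + 1 + lisL σR`. -/
theorem splitting_lemma {n : ℕ} (σ : Fin n → ℤ) (l : List (Fin n))
    (hl : IsIncSubseq σ l) (hlen : l.length = lis σ)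
    (k : Fin l.length) (j : Fin n) (hj : l.get k = j)
    (σL σR : List ℤ)
    (hσL : σL = ((List.ofFn σ).take j.val).filter (fun a => a < σ j))
    (hσR : σR = ((List.ofFn σ).drop (j.val + 1)).filter (fun a => σ j < a))
    (tL : List ℤ) (htL : tL.Sublist σL) (htLs : tL.Pairwise (· < ·))
    (htLlen : tL.length = lisL σL)
    (tR : List ℤ) (htR : tR.Sublist σR) (htRs : tR.Pairwise (· < ·))
    (htRlen : tR.length = lisL σR) :
    (tL ++ σ j :: tR).Sublist (List.ofFn σ) ∧
    (tL ++ σ j :: tR).Pairwise (· < ·) ∧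
    (tL ++ σ j :: tR).length = lis σ ∧
    lis σ = lisL σL + 1 + lisL σR := by
  obtain rfl : σL = smallerBefore σ j := hσL
  obtain rfl : σR = largerAfter σ j := hσR
  have hsub := append_cons_sublist_ofFn σ htL htR
  have hsorted := pairwise_append_cons σ htL htR htLs htRs
  have hle := length_le_lis_of_sublist_ofFn σ hsub hsorted
  have hge := length_le_lisL_smallerBefore_add_lisL_largerAfter σ hl k hj
  simp only [List.length_append, List.length_cons] at hle ⊢
  exact ⟨hsub, hsorted, by omega, by omega⟩
end
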